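/- arXiv:1906.09476 — 3 statements merged into one kernel-verified Lean document; each statement's English description precedes it below -/
import Mathlib

section
/- Let B = (C, μ, ε, δ) be a differential graded S-bocs. Then the induction assignment Φ(M) = (M⊗_S C, id_M⊗μ), Φ(f) = (f⊗id_C)(id_M⊗μ) defines a fully faithful functor of graded categories Φ : GMod-B → GComod-B into graded right B-comodules; for each degree d, the map Hom^d_{GMod-S}(M⊗_S C, N) → Hom^d_{GComod-B}(Ind_B(M), Ind_B(N)) is a linear isomorphism with inverse φ ↦ ρ_N(id_N⊗ε) ∘ φ. -/
/-!
`Ind_B(M)` is the cofree comodule on `M`: its coaction is the comultiplication of `C`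
whiskered by `M`, so it inherits coassociativity and counitality from `C`. Naturality of this
coaction in `M` makes each `Φ(f)` a comodule map, and the counit of `Ind_B(N)` recovers `f`
from `Φ(f)`. Conversely, for a comodule map `φ`, moving `φ` past the coaction gives
`Φ(φ ≫ (id ⊗ ε) ≫ ρ) = φ ≫ Φ(id) = φ`.
-/

open CategoryTheory MonoidalCategory

namespace Bocs

variable {V : Type*} [Category V] [MonoidalCategory V] {C : V}

def inducedCoaction (μ : C ⟶ C ⊗ C) (M : V) : M ⊗ C ⟶ (M ⊗ C) ⊗ C :=
  (M ◁ μ) ≫ (α_ M C C).inv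

def inducedMap (μ : C ⟶ C ⊗ C) {M N : V} (f : M ⊗ C ⟶ N) : M ⊗ C ⟶ N ⊗ C :=
  (M ◁ μ) ≫ (α_ M C C).inv ≫ (f ▷ C)

def counitMap (ε : C ⟶ 𝟙_ V) (M : V) : M ⊗ C ⟶ M :=
  (M ◁ ε) ≫ (ρ_ M).hom

variable {μ : C ⟶ C ⊗ C} {ε : C ⟶ 𝟙_ V}

lemma inducedMap_eq {M N : V} (f : M ⊗ C ⟶ N) :
    inducedMap μ f = inducedCoaction μ M ≫ (f ▷ C) :=
  (Category.assoc _ _ _).symm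

lemma inducedCoaction_naturality {X Y : V} (g : X ⟶ Y) :
    (g ▷ C) ≫ inducedCoaction μ Y = inducedCoaction μ X ≫ ((g ▷ C) ▷ C) := by
  simp [inducedCoaction, ← whisker_exchange_assoc]

lemma inducedCoaction_coassoc (hcoassoc : μ ≫ (μ ▷ C) ≫ (α_ C C C).hom = μ ≫ (C ◁ μ))
    (M : V) :
    inducedCoaction μ M ≫ (inducedCoaction μ M ▷ C) ≫ (α_ (M ⊗ C) C C).hom =
      inducedCoaction μ M ≫ ((M ⊗ C) ◁ μ) := by
  have h := congrArg (M ◁ ·) hcoassoc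
  simp only [MonoidalCategory.whiskerLeft_comp] at h
  simp [inducedCoaction, reassoc_of% h]

lemma inducedCoaction_comp_self (hcoassoc : μ ≫ (μ ▷ C) ≫ (α_ C C C).hom = μ ≫ (C ◁ μ))
    (M : V) :
    inducedCoaction μ M ≫ (inducedCoaction μ M ▷ C) =
      inducedCoaction μ M ≫ inducedCoaction μ (M ⊗ C) := by
  have h := inducedCoaction_coassoc hcoassoc M
  rw [← Category.assoc, ← Iso.eq_comp_inv] at h
  simpa only [inducedCoaction, Category.assoc] using h

lemma inducedCoaction_counit (hcounit_r : μ ≫ (C ◁ ε) ≫ (ρ_ C).hom = 𝟙 C) (M : V) :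
    inducedCoaction μ M ≫ counitMap ε (M ⊗ C) = 𝟙 (M ⊗ C) := by
  have h := congrArg (M ◁ ·) hcounit_r
  simp only [MonoidalCategory.whiskerLeft_comp, MonoidalCategory.whiskerLeft_id] at h
  simpa [inducedCoaction, counitMap, ← associator_inv_naturality_right_assoc] using h

lemma inducedMap_counitMap (hcounit_l : μ ≫ (ε ▷ C) ≫ (λ_ C).hom = 𝟙 C) (M : V) :
    inducedMap μ (counitMap ε M) = 𝟙 (M ⊗ C) := by
  have h := congrArg (M ◁ ·) hcounit_l
  simp only [MonoidalCategory.whiskerLeft_comp, MonoidalCategory.whiskerLeft_id] at h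
  simpa [inducedMap, counitMap, ← associator_inv_naturality_middle_assoc] using h

lemma inducedMap_comp_inducedCoaction
    (hcoassoc : μ ≫ (μ ▷ C) ≫ (α_ C C C).hom = μ ≫ (C ◁ μ)) {M N : V} (f : M ⊗ C ⟶ N) :
    inducedMap μ f ≫ inducedCoaction μ N = inducedCoaction μ M ≫ (inducedMap μ f ▷ C) := by
  rw [inducedMap_eq, Category.assoc, inducedCoaction_naturality, comp_whiskerRight,
    reassoc_of% inducedCoaction_comp_self hcoassoc M]

lemma inducedMap_comp (hcoassoc : μ ≫ (μ ▷ C) ≫ (α_ C C C).hom = μ ≫ (C ◁ μ))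
    {M N L : V} (g : N ⊗ C ⟶ L) (f : M ⊗ C ⟶ N) :
    inducedMap μ (inducedMap μ f ≫ g) = inducedMap μ f ≫ inducedMap μ g := by
  rw [inducedMap_eq, comp_whiskerRight, ← Category.assoc,
    ← inducedMap_comp_inducedCoaction hcoassoc, Category.assoc, ← inducedMap_eq]

lemma inducedMap_comp_counitMap (hcounit_r : μ ≫ (C ◁ ε) ≫ (ρ_ C).hom = 𝟙 C)
    {M N : V} (f : M ⊗ C ⟶ N) :
    inducedMap μ f ≫ counitMap ε N = f := by
  have h := inducedCoaction_counit hcounit_r M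
  rw [counitMap] at h ⊢
  rw [inducedMap_eq, Category.assoc, ← whisker_exchange_assoc, rightUnitor_naturality,
    reassoc_of% h]

lemma inducedMap_comp_counitMap_of_comm
    (hcounit_l : μ ≫ (ε ▷ C) ≫ (λ_ C).hom = 𝟙 C) {M N : V} (φ : M ⊗ C ⟶ N ⊗ C)
    (hφ : φ ≫ inducedCoaction μ N = inducedCoaction μ M ≫ (φ ▷ C)) :
    inducedMap μ (φ ≫ counitMap ε N) = φ := by
  rw [inducedMap_eq, comp_whiskerRight, ← reassoc_of% hφ, ← inducedMap_eq,
    inducedMap_counitMap hcounit_l, Category.comp_id]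

end Bocs

open Bocs

theorem induction_functor_fully_faithful
    {V : Type*} [Category V] [MonoidalCategory V]
    (C : V) (μ : C ⟶ C ⊗ C) (ε : C ⟶ 𝟙_ V)
    (hcounit_r : μ ≫ (C ◁ ε) ≫ (ρ_ C).hom = 𝟙 C)
    (hcounit_l : μ ≫ (ε ▷ C) ≫ (λ_ C).hom = 𝟙 C)
    (hcoassoc : μ ≫ (μ ▷ C) ≫ (α_ C C C).hom = μ ≫ (C ◁ μ)) :
    -- (a) each `Ind_B(M) = (M ⊗ C, (id_M ⊗ μ) ≫ α⁻¹)` is a graded right `B`-comodule: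
    (∀ M : V,
        ((M ◁ μ) ≫ (α_ M C C).inv) ≫ (((M ◁ μ) ≫ (α_ M C C).inv) ▷ C)
            ≫ (α_ (M ⊗ C) C C).hom =
          ((M ◁ μ) ≫ (α_ M C C).inv) ≫ ((M ⊗ C) ◁ μ) ∧
        ((M ◁ μ) ≫ (α_ M C C).inv) ≫ ((M ⊗ C) ◁ ε) ≫ (ρ_ (M ⊗ C)).hom = 𝟙 (M ⊗ C)) ∧
      -- (b) `Φ(f)` is a morphism of graded `B`-comodules `Ind_B(M) → Ind_B(N)`:
      (∀ {M N : V} (f : M ⊗ C ⟶ N),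
        ((M ◁ μ) ≫ (α_ M C C).inv ≫ (f ▷ C)) ≫ ((N ◁ μ) ≫ (α_ N C C).inv) =
          ((M ◁ μ) ≫ (α_ M C C).inv) ≫
            (((M ◁ μ) ≫ (α_ M C C).inv ≫ (f ▷ C)) ▷ C)) ∧
      -- (c) `Φ` preserves identities:
      (∀ M : V,
        (M ◁ μ) ≫ (α_ M C C).inv ≫ (((M ◁ ε) ≫ (ρ_ M).hom) ▷ C) = 𝟙 (M ⊗ C)) ∧
      -- (d) `Φ` preserves composition (`Φ(g * f) = Φ(f) ≫ Φ(g)`):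
      (∀ {M N L : V} (g : N ⊗ C ⟶ L) (f : M ⊗ C ⟶ N),
        (M ◁ μ) ≫ (α_ M C C).inv ≫
            ((((M ◁ μ) ≫ (α_ M C C).inv ≫ (f ▷ C)) ≫ g) ▷ C) =
          ((M ◁ μ) ≫ (α_ M C C).inv ≫ (f ▷ C)) ≫
            ((N ◁ μ) ≫ (α_ N C C).inv ≫ (g ▷ C))) ∧
      -- (e) `Φ` is fully faithful, with inverse `φ ↦ φ ≫ (id_N ⊗ ε) ≫ ρ_N` on hom sets:
      (∀ {M N : V} (f : M ⊗ C ⟶ N),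
        ((M ◁ μ) ≫ (α_ M C C).inv ≫ (f ▷ C)) ≫ (N ◁ ε) ≫ (ρ_ N).hom = f) ∧
      (∀ {M N : V} (φ : M ⊗ C ⟶ N ⊗ C),
        φ ≫ ((N ◁ μ) ≫ (α_ N C C).inv) =
            ((M ◁ μ) ≫ (α_ M C C).inv) ≫ (φ ▷ C) →
        (M ◁ μ) ≫ (α_ M C C).inv ≫ ((φ ≫ (N ◁ ε) ≫ (ρ_ N).hom) ▷ C) = φ) :=
  ⟨fun M => ⟨inducedCoaction_coassoc hcoassoc M, inducedCoaction_counit hcounit_r M⟩,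
    inducedMap_comp_inducedCoaction hcoassoc,
    inducedMap_counitMap hcounit_l,
    inducedMap_comp hcoassoc,
    inducedMap_comp_counitMap hcounit_r,
    inducedMap_comp_counitMap_of_comm hcounit_l⟩
end

section
/- Let B be a triangular graded S-bocs: a normal graded S-bocs whose reduced part C̄ carries an exhaustive filtration 0 = C̄₀ ⊆ C̄₁ ⊆ ⋯ of graded sub-bimodules with μ̄(C̄ᵢ) ⊆ C̄_{i−1}⊗C̄_{i−1} and δ̄(C̄ᵢ) ⊆ C̄ᵢ. Let f = (0, f¹) : M → M be a degree-0 endomorphism in 𝕄od-B with vanishing first component. Then f is locally nilpotent: for each x ∈ C̄ there is n_x ∈ ℕ such that (fⁿ)¹(m⊗x) = 0 for all n ≥ n_x and all m ∈ M. Consequently the infinite sum Σ_{n≥1} fⁿ is a well-defined endomorphism of M in 𝕄od-B. -/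
/-!
Induction on the filtration: the component `(0 ⊗ id)` of the recursion for `(fⁿ⁺¹)¹` vanishes,
and triangularity writes `(fⁿ⁺¹)¹(m ⊗ x)` for `x ∈ C̄ᵢ₊₁` as a sum of values of `(fⁿ)¹` on
`m' ⊗ z` with `z ∈ C̄ᵢ`; hence `(fⁿ)¹` kills `M ⊗ C̄ᵢ` once `n > i`, and as `C̄ = ⋃ C̄ᵢ` every
pure tensor is killed by all high powers. Since pure tensors generate `M ⊗ C̄`, the partial
sums of `Σ fⁿ` are pointwise eventually constant, and a pointwise eventual limit of additive
maps is additive.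
-/

open Filter

section EventualLimits

variable {ι A B : Type*}

theorem eventually_apply_eq_zero_of_closure_eq_top [AddGroup A] [AddGroup B] {l : Filter ι}
    {p : ι → A →+ B} {s : Set A} (hs : AddSubgroup.closure s = ⊤)
    (h : ∀ a ∈ s, ∀ᶠ i in l, p i a = 0) (a : A) : ∀ᶠ i in l, p i a = 0 := by
  let K : AddSubgroup A :=
    { carrier := {a | ∀ᶠ i in l, p i a = 0}
      add_mem' := fun ha hb => by filter_upwards [ha, hb] with i hai hbi; simp [hai, hbi]
      zero_mem' := by simp
      neg_mem' := fun ha => by filter_upwards [ha] with i hai; simp [hai] }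
  have hsK : AddSubgroup.closure s ≤ K := (AddSubgroup.closure_le K).2 h
  exact hsK (hs ▸ AddSubgroup.mem_top a)

theorem exists_addMonoidHom_eventually_eq [AddZeroClass A] [AddZeroClass B] {l : Filter ι}
    [l.NeBot] (S : ι → A →+ B) (h : ∀ a, ∃ b, ∀ᶠ i in l, S i a = b) :
    ∃ g : A →+ B, ∀ a, ∀ᶠ i in l, S i a = g a := by
  choose c hc using h
  refine ⟨{ toFun := c, map_zero' := ?_, map_add' := fun a b => ?_ }, hc⟩
  · obtain ⟨i, hi⟩ := (hc 0).exists
    rw [← hi, map_zero]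
  · obtain ⟨i, hab, ha, hb⟩ := ((hc (a + b)).and ((hc a).and (hc b))).exists
    rw [← hab, ← ha, ← hb, map_add]

theorem exists_eventually_sum_Icc_eq [AddCommMonoid B] {f : ℕ → B}
    (h : ∀ᶠ j in atTop, f j = 0) : ∃ b, ∀ᶠ n in atTop, ∑ j ∈ Finset.Icc 1 n, f j = b := by
  obtain ⟨N, hN⟩ := eventually_atTop.1 h
  refine ⟨∑ j ∈ Finset.Icc 1 N, f j, eventually_atTop.2 ⟨N, fun n hn => ?_⟩⟩
  refine (Finset.sum_subset (Finset.Icc_subset_Icc le_rfl hn) fun j hj hjN => hN j ?_).symm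
  simp only [Finset.mem_Icc, not_and, not_le] at hj hjN
  exact (hjN hj.1).le

end EventualLimits

section TriangularBocs

variable {Cb Mc TM TMM : Type*} [AddCommGroup Cb] [AddCommGroup Mc] [AddCommGroup TM]
  [AddCommGroup TMM] {F : ℕ → AddSubgroup Cb} {tmul : Mc →+ Cb →+ TM}
  {tmul2 : TM →+ Cb →+ TMM} {tmap : (Mc →+ Mc) → (TM →+ TM)} {tmap1 : (TM →+ Mc) → (TMM →+ TM)}
  {mubT : TM →+ TMM} {f1 : TM →+ Mc} {p : ℕ → (TM →+ Mc)}

theorem apply_tmul_eq_zero_of_mem_filtration (hF0 : F 0 = ⊥)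
    (htmap : ∀ (g : Mc →+ Mc) (m : Mc) (x : Cb), tmap g (tmul m x) = tmul (g m) x)
    (htmap1 : ∀ (g : TM →+ Mc) (t : TM) (y : Cb), tmap1 g (tmul2 t y) = tmul (g t) y)
    (htriang : ∀ (i : ℕ) (x : Cb), x ∈ F (i + 1) →
      ∃ (n : ℕ) (y z : Fin n → Cb), (∀ j, y j ∈ F i ∧ z j ∈ F i) ∧
        ∀ m : Mc, mubT (tmul m x) = ∑ j, tmul2 (tmul m (y j)) (z j))
    (hpsucc : ∀ n : ℕ, 1 ≤ n →
      p (n + 1) = (p n).comp (tmap (0 : Mc →+ Mc)) + (p n).comp ((tmap1 f1).comp mubT))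
    {i : ℕ} {x : Cb} (hx : x ∈ F i) {n : ℕ} (hin : i < n) (m : Mc) : p n (tmul m x) = 0 := by
  induction i generalizing x n m with
  | zero =>
    rw [hF0, AddSubgroup.mem_bot] at hx
    simp [hx]
  | succ i ih =>
    obtain ⟨n, rfl⟩ : ∃ k, n = k + 1 := ⟨n - 1, by omega⟩
    have hrec : p (n + 1) (tmul m x) = p n (tmap1 f1 (mubT (tmul m x))) := by
      simp [hpsucc n (by omega), htmap]
    obtain ⟨k, y, z, hyz, hμ⟩ := htriang i x hx
    rw [hrec, hμ, map_sum, map_sum]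
    exact Finset.sum_eq_zero fun j _ => by
      rw [htmap1]
      exact ih (hyz j).2 (by omega) _

end TriangularBocs

theorem locally_nilpotent_endomorphisms_over_triangular_bocs_general
    {Cb : Type} [AddCommGroup Cb]
    {Mc : Type} [AddCommGroup Mc]
    {TM : Type} [AddCommGroup TM]
    {TMM : Type} [AddCommGroup TMM]
    -- the triangular filtration of `C̄`:
    (F : ℕ → AddSubgroup Cb)
    (hF0 : F 0 = ⊥) (hFexh : ∀ x : Cb, ∃ i, x ∈ F i)
    -- pure tensors of `TM = M ⊗ C̄` and `TMM = M ⊗ C̄ ⊗ C̄`: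
    (tmul : Mc →+ Cb →+ TM) (tmul2 : TM →+ Cb →+ TMM)
    (hgen : AddSubgroup.closure {t : TM | ∃ (m : Mc) (x : Cb), t = tmul m x} = ⊤)
    -- `g ⊗ id_{C̄}` in its two versions, and `id_M ⊗ μ̄`:
    (tmap : (Mc →+ Mc) → (TM →+ TM))
    (htmap : ∀ (g : Mc →+ Mc) (m : Mc) (x : Cb), tmap g (tmul m x) = tmul (g m) x)
    (tmap1 : (TM →+ Mc) → (TMM →+ TM))
    (htmap1 : ∀ (g : TM →+ Mc) (t : TM) (y : Cb), tmap1 g (tmul2 t y) = tmul (g t) y)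
    (mubT : TM →+ TMM)
    -- triangularity: `μ̄(C̄_{i+1}) ⊆ C̄ᵢ ⊗ C̄ᵢ`, via `μ̄ x = Σ_j y_j ⊗ z_j`:
    (htriang : ∀ (i : ℕ) (x : Cb), x ∈ F (i + 1) →
      ∃ (n : ℕ) (y z : Fin n → Cb), (∀ j, y j ∈ F i ∧ z j ∈ F i) ∧
        ∀ m : Mc, mubT (tmul m x) = ∑ j, tmul2 (tmul m (y j)) (z j))
    -- the endomorphism `f = (0, f¹)` of `M` in `𝕄od-B` and its powers `p n = (fⁿ)¹`:
    (f1 : TM →+ Mc)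
    (p : ℕ → (TM →+ Mc))
    (hpsucc : ∀ n : ℕ, 1 ≤ n →
      p (n + 1) = (p n).comp (tmap (0 : Mc →+ Mc)) +
        (p n).comp ((tmap1 f1).comp mubT)) :
    -- local nilpotence:
    (∀ x : Cb, ∃ nx : ℕ, ∀ n : ℕ, nx ≤ n → 1 ≤ n → ∀ m : Mc, p n (tmul m x) = 0) ∧
      -- hence `Σ_{n≥1} fⁿ` is a well-defined morphism in `𝕄od-B`
      -- (its first component is `0`, its second component is the following `g`):
      (∃ g : TM →+ Mc, ∀ (m : Mc) (x : Cb), ∃ N₀ : ℕ, ∀ n : ℕ, N₀ ≤ n →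
        g (tmul m x) = ∑ j ∈ Finset.Icc 1 n, p j (tmul m x)) := by
  have hnil : ∀ x : Cb, ∃ nx : ℕ, ∀ n : ℕ, nx ≤ n → 1 ≤ n → ∀ m : Mc, p n (tmul m x) = 0 := by
    intro x
    obtain ⟨i, hi⟩ := hFexh x
    exact ⟨i + 1, fun n hin _ m =>
      apply_tmul_eq_zero_of_mem_filtration hF0 htmap htmap1 htriang hpsucc hi hin m⟩
  have hevent : ∀ t : TM, ∀ᶠ n in atTop, p n t = 0 := by
    refine eventually_apply_eq_zero_of_closure_eq_top hgen ?_
    rintro _ ⟨m, x, rfl⟩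
    obtain ⟨nx, hnx⟩ := hnil x
    exact eventually_atTop.2 ⟨nx + 1, fun n hn => hnx n (by omega) (by omega) m⟩
  obtain ⟨g, hg⟩ := exists_addMonoidHom_eventually_eq (l := atTop)
    (fun n => ∑ j ∈ Finset.Icc 1 n, p j) fun t => by
      simpa only [AddMonoidHom.finsetSum_apply] using exists_eventually_sum_Icc_eq (hevent t)
  refine ⟨hnil, g, fun m x => ?_⟩
  obtain ⟨N₀, hN₀⟩ := eventually_atTop.1 (hg (tmul m x))
  exact ⟨N₀, fun n hn => by
    simpa only [AddMonoidHom.finsetSum_apply] using (hN₀ n hn).symm⟩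

theorem locally_nilpotent_endomorphisms_over_triangular_bocs
    {Cb : Type} [AddCommGroup Cb]
    {Mc : Type} [AddCommGroup Mc]
    {TM : Type} [AddCommGroup TM]
    {TMM : Type} [AddCommGroup TMM]
    -- the triangular filtration of `C̄`:
    (F : ℕ → AddSubgroup Cb)
    (hF0 : F 0 = ⊥) (hFmono : Monotone F) (hFexh : ∀ x : Cb, ∃ i, x ∈ F i)
    (δb : Cb →+ Cb) (hδb : ∀ (i : ℕ) (x : Cb), x ∈ F i → δb x ∈ F i)
    -- pure tensors of `TM = M ⊗ C̄` and `TMM = M ⊗ C̄ ⊗ C̄`: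
    (tmul : Mc →+ Cb →+ TM) (tmul2 : TM →+ Cb →+ TMM)
    (hgen : AddSubgroup.closure {t : TM | ∃ (m : Mc) (x : Cb), t = tmul m x} = ⊤)
    -- `g ⊗ id_{C̄}` in its two versions, and `id_M ⊗ μ̄`:
    (tmap : (Mc →+ Mc) → (TM →+ TM))
    (htmap : ∀ (g : Mc →+ Mc) (m : Mc) (x : Cb), tmap g (tmul m x) = tmul (g m) x)
    (tmap1 : (TM →+ Mc) → (TMM →+ TM))
    (htmap1 : ∀ (g : TM →+ Mc) (t : TM) (y : Cb), tmap1 g (tmul2 t y) = tmul (g t) y)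
    (mubT : TM →+ TMM)
    -- triangularity: `μ̄(C̄_{i+1}) ⊆ C̄ᵢ ⊗ C̄ᵢ`, via `μ̄ x = Σ_j y_j ⊗ z_j`:
    (htriang : ∀ (i : ℕ) (x : Cb), x ∈ F (i + 1) →
      ∃ (n : ℕ) (y z : Fin n → Cb), (∀ j, y j ∈ F i ∧ z j ∈ F i) ∧
        ∀ m : Mc, mubT (tmul m x) = ∑ j, tmul2 (tmul m (y j)) (z j))
    -- the endomorphism `f = (0, f¹)` of `M` in `𝕄od-B` and its powers `p n = (fⁿ)¹`:
    (f1 : TM →+ Mc)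
    (p : ℕ → (TM →+ Mc))
    (hp1 : p 1 = f1)
    (hpsucc : ∀ n : ℕ, 1 ≤ n →
      p (n + 1) = (p n).comp (tmap (0 : Mc →+ Mc)) +
        (p n).comp ((tmap1 f1).comp mubT)) :
    -- local nilpotence:
    (∀ x : Cb, ∃ nx : ℕ, ∀ n : ℕ, nx ≤ n → 1 ≤ n → ∀ m : Mc, p n (tmul m x) = 0) ∧
      -- hence `Σ_{n≥1} fⁿ` is a well-defined morphism in `𝕄od-B`
      -- (its first component is `0`, its second component is the following `g`):
      (∃ g : TM →+ Mc, ∀ (m : Mc) (x : Cb), ∃ N₀ : ℕ, ∀ n : ℕ, N₀ ≤ n →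
        g (tmul m x) = ∑ j ∈ Finset.Icc 1 n, p j (tmul m x)) :=
  locally_nilpotent_endomorphisms_over_triangular_bocs_general F hF0 hFexh tmul tmul2 hgen tmap
    htmap tmap1 htmap1 mubT htriang f1 p hpsucc
end

section
/- Let B be a triangular graded S-bocs and f : (M,u) → (N,v) a degree-0 morphism of twisted B-modules. Then f is an isomorphism in TGMod⁰-B if and only if its first component f⁰ : M → N is an isomorphism of graded right S-modules. In particular, if f is invertible as a morphism in GMod-B, then its inverse g automatically satisfies δ̂(g) = g*v − u*g and is a morphism of twisted modules (N,v) → (M,u). -/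
/-!
Differentiating `f ∘ g = 1` with the Leibniz rule (no sign appears, as `f` has degree 0) gives
`f ∘ d g = -(d f ∘ g)`, hence `d g = -(g ∘ d f ∘ g)`. Substituting `d f = f ∘ u - v ∘ f` turns this
into `d g = g ∘ v - u ∘ g`, so every inverse of `f` in `GMod-B` is a morphism of twisted modules,
and triangularity reduces invertibility of `f` to that of `f⁰`.
-/

section DGCategory

variable {Obj : Type} {Hom : Obj → Obj → Type} [∀ M N, AddCommGroup (Hom M N)]
  {comp : ∀ {M N L : Obj}, Hom N L → Hom M N → Hom M L}

theorem comp_neg_right_of_comp_add_right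
    (comp_add_right : ∀ {M N L : Obj} (g : Hom N L) (f f' : Hom M N),
      comp g (f + f') = comp g f + comp g f')
    {M N L : Obj} (g : Hom N L) (f : Hom M N) : comp g (-f) = -comp g f :=
  map_neg (AddMonoidHom.mk' (comp g) (comp_add_right g)) f

theorem comp_sub_right_of_comp_add_right
    (comp_add_right : ∀ {M N L : Obj} (g : Hom N L) (f f' : Hom M N),
      comp g (f + f') = comp g f + comp g f')
    {M N L : Obj} (g : Hom N L) (f f' : Hom M N) : comp g (f - f') = comp g f - comp g f' :=
  map_sub (AddMonoidHom.mk' (comp g) (comp_add_right g)) f f'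

theorem comp_sub_left_of_comp_add_left
    (comp_add_left : ∀ {M N L : Obj} (g g' : Hom N L) (f : Hom M N),
      comp (g + g') f = comp g f + comp g' f)
    {M N L : Obj} (g g' : Hom N L) (f : Hom M N) : comp (g - g') f = comp g f - comp g' f :=
  map_sub (AddMonoidHom.mk' (comp · f) (comp_add_left · · f)) g g'

variable {one : ∀ M, Hom M M} {d : ∀ {M N : Obj}, Hom M N → Hom M N}
  {homog : ∀ {M N : Obj}, Hom M N → ℤ → Prop}

theorem d_inverse_eq
    (comp_assoc : ∀ {M N L K : Obj} (h : Hom L K) (g : Hom N L) (f : Hom M N),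
      comp (comp h g) f = comp h (comp g f))
    (one_comp : ∀ {M N : Obj} (f : Hom M N), comp (one N) f = f)
    (comp_add_right : ∀ {M N L : Obj} (g : Hom N L) (f f' : Hom M N),
      comp g (f + f') = comp g f + comp g f')
    (d_one : ∀ M, d (one M) = 0)
    (leibniz : ∀ {M N L : Obj} (g : Hom N L) (f : Hom M N) (e : ℤ), homog g e →
      d (comp g f) = comp (d g) f + ((Int.negOnePow e : ℤˣ) : ℤ) • comp g (d f))
    {M N : Obj} {f : Hom M N} {g : Hom N M} (hf0 : homog f 0)
    (hgf : comp g f = one M) (hfg : comp f g = one N) :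
    d g = -comp g (comp (d f) g) := by
  have hfdg : comp f (d g) = -comp (d f) g := by
    have h := leibniz f g 0 hf0
    rw [hfg, d_one, Int.negOnePow_zero, Units.val_one, one_smul] at h
    exact eq_neg_of_add_eq_zero_right h.symm
  calc d g = comp (comp g f) (d g) := by rw [hgf, one_comp]
    _ = -comp g (comp (d f) g) := by
      rw [comp_assoc, hfdg, comp_neg_right_of_comp_add_right @comp_add_right]

theorem d_inverse_eq_of_d_eq
    (comp_assoc : ∀ {M N L K : Obj} (h : Hom L K) (g : Hom N L) (f : Hom M N),
      comp (comp h g) f = comp h (comp g f))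
    (one_comp : ∀ {M N : Obj} (f : Hom M N), comp (one N) f = f)
    (comp_one : ∀ {M N : Obj} (f : Hom M N), comp f (one M) = f)
    (comp_add_left : ∀ {M N L : Obj} (g g' : Hom N L) (f : Hom M N),
      comp (g + g') f = comp g f + comp g' f)
    (comp_add_right : ∀ {M N L : Obj} (g : Hom N L) (f f' : Hom M N),
      comp g (f + f') = comp g f + comp g f')
    (d_one : ∀ M, d (one M) = 0)
    (leibniz : ∀ {M N L : Obj} (g : Hom N L) (f : Hom M N) (e : ℤ), homog g e →
      d (comp g f) = comp (d g) f + ((Int.negOnePow e : ℤˣ) : ℤ) • comp g (d f))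
    {M N : Obj} {u : Hom M M} {v : Hom N N} {f : Hom M N} {g : Hom N M} (hf0 : homog f 0)
    (hdf : d f = comp f u - comp v f) (hgf : comp g f = one M) (hfg : comp f g = one N) :
    d g = comp g v - comp u g := by
  rw [d_inverse_eq @comp_assoc one_comp comp_add_right d_one leibniz hf0 hgf hfg,
    hdf, comp_sub_left_of_comp_add_left @comp_add_left,
    comp_sub_right_of_comp_add_right @comp_add_right]
  simp only [comp_assoc]
  rw [← comp_assoc g f, hgf, one_comp, hfg, comp_one, neg_sub]

end DGCategory

theorem twisted_iso_iff_first_component_iso_general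
    {Obj : Type} (Hom : Obj → Obj → Type) [∀ M N, AddCommGroup (Hom M N)]
    (homog : ∀ {M N : Obj}, Hom M N → ℤ → Prop)
    (comp : ∀ {M N L : Obj}, Hom N L → Hom M N → Hom M L)
    (one : ∀ M, Hom M M)
    (d : ∀ {M N : Obj}, Hom M N → Hom M N)
    -- the predicate "the first component is an isomorphism of graded `S`-modules":
    (iso0 : ∀ {M N : Obj}, Hom M N → Prop)
    -- dg-category axioms for `GMod-B`:
    (comp_assoc : ∀ {M N L K : Obj} (h : Hom L K) (g : Hom N L) (f : Hom M N),
      comp (comp h g) f = comp h (comp g f))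
    (one_comp : ∀ {M N : Obj} (f : Hom M N), comp (one N) f = f)
    (comp_one : ∀ {M N : Obj} (f : Hom M N), comp f (one M) = f)
    (comp_add_left : ∀ {M N L : Obj} (g g' : Hom N L) (f : Hom M N),
      comp (g + g') f = comp g f + comp g' f)
    (comp_add_right : ∀ {M N L : Obj} (g : Hom N L) (f f' : Hom M N),
      comp g (f + f') = comp g f + comp g f')
    (d_one : ∀ M, d (one M) = 0)
    (leibniz : ∀ {M N L : Obj} (g : Hom N L) (f : Hom M N) (e : ℤ), homog g e →
      d (comp g f) = comp (d g) f + ((Int.negOnePow e : ℤˣ) : ℤ) • comp g (d f))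
    -- triangularity (context): a degree-0 morphism of `GMod-B` is invertible iff
    -- its first component is an isomorphism of graded `S`-modules
    (triangular : ∀ {M N : Obj} (f : Hom M N), homog f 0 →
      (iso0 f ↔ ∃ g : Hom N M, comp g f = one M ∧ comp f g = one N))
    -- the inverse of a homogeneous degree-0 morphism is homogeneous of degree 0
    (homog_inv : ∀ {M N : Obj} (f : Hom M N) (g : Hom N M), homog f 0 →
      comp g f = one M → comp f g = one N → homog g 0)
    -- twisted modules `(M,u)`, `(N,v)` and a degree-0 morphism of twisted modules `f`:
    {M N : Obj} (u : Hom M M) (v : Hom N N)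
    (f : Hom M N) (hf0 : homog f 0)
    (hfmor : d f + comp v f - comp f u = 0) :
    ((∃ g : Hom N M, homog g 0 ∧ d g + comp u g - comp g v = 0 ∧
        comp g f = one M ∧ comp f g = one N) ↔ iso0 f) ∧
      (∀ g : Hom N M, comp g f = one M → comp f g = one N →
        d g = comp g v - comp u g ∧ d g + comp u g - comp g v = 0) := by
  have hdf : d f = comp f u - comp v f := eq_sub_of_add_eq (sub_eq_zero.mp hfmor)
  have hdg : ∀ g : Hom N M, comp g f = one M → comp f g = one N →
      d g = comp g v - comp u g := fun g hgf hfg =>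
    d_inverse_eq_of_d_eq @comp_assoc one_comp comp_one comp_add_left
      comp_add_right d_one leibniz hf0 hdf hgf hfg
  have htw : ∀ g : Hom N M, comp g f = one M → comp f g = one N →
      d g + comp u g - comp g v = 0 := fun g hgf hfg =>
    sub_eq_zero_of_eq (eq_sub_iff_add_eq.mp (hdg g hgf hfg))
  refine ⟨⟨fun ⟨g, _, _, hgf, hfg⟩ => (triangular f hf0).2 ⟨g, hgf, hfg⟩, fun hiso => ?_⟩,
    fun g hgf hfg => ⟨hdg g hgf hfg, htw g hgf hfg⟩⟩
  obtain ⟨g, hgf, hfg⟩ := (triangular f hf0).1 hiso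
  exact ⟨g, homog_inv f g hf0 hgf hfg, htw g hgf hfg, hgf, hfg⟩

theorem twisted_iso_iff_first_component_iso
    {Obj : Type} (Hom : Obj → Obj → Type) [∀ M N, AddCommGroup (Hom M N)]
    (homog : ∀ {M N : Obj}, Hom M N → ℤ → Prop)
    (comp : ∀ {M N L : Obj}, Hom N L → Hom M N → Hom M L)
    (one : ∀ M, Hom M M)
    (d : ∀ {M N : Obj}, Hom M N → Hom M N)
    -- the predicate "the first component is an isomorphism of graded `S`-modules":
    (iso0 : ∀ {M N : Obj}, Hom M N → Prop)
    -- dg-category axioms for `GMod-B`: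
    (comp_assoc : ∀ {M N L K : Obj} (h : Hom L K) (g : Hom N L) (f : Hom M N),
      comp (comp h g) f = comp h (comp g f))
    (one_comp : ∀ {M N : Obj} (f : Hom M N), comp (one N) f = f)
    (comp_one : ∀ {M N : Obj} (f : Hom M N), comp f (one M) = f)
    (comp_add_left : ∀ {M N L : Obj} (g g' : Hom N L) (f : Hom M N),
      comp (g + g') f = comp g f + comp g' f)
    (comp_add_right : ∀ {M N L : Obj} (g : Hom N L) (f f' : Hom M N),
      comp g (f + f') = comp g f + comp g f')
    (d_add : ∀ {M N : Obj} (f f' : Hom M N), d (f + f') = d f + d f')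
    (d_sq : ∀ {M N : Obj} (f : Hom M N), d (d f) = 0)
    (d_one : ∀ M, d (one M) = 0)
    (leibniz : ∀ {M N L : Obj} (g : Hom N L) (f : Hom M N) (e : ℤ), homog g e →
      d (comp g f) = comp (d g) f + ((Int.negOnePow e : ℤˣ) : ℤ) • comp g (d f))
    (homog_comp : ∀ {M N L : Obj} {g : Hom N L} {f : Hom M N} {e e' : ℤ},
      homog g e → homog f e' → homog (comp g f) (e + e'))
    -- triangularity (context): a degree-0 morphism of `GMod-B` is invertible iff
    -- its first component is an isomorphism of graded `S`-modules
    (triangular : ∀ {M N : Obj} (f : Hom M N), homog f 0 →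
      (iso0 f ↔ ∃ g : Hom N M, comp g f = one M ∧ comp f g = one N))
    -- the inverse of a homogeneous degree-0 morphism is homogeneous of degree 0
    (homog_inv : ∀ {M N : Obj} (f : Hom M N) (g : Hom N M), homog f 0 →
      comp g f = one M → comp f g = one N → homog g 0)
    -- twisted modules `(M,u)`, `(N,v)` and a degree-0 morphism of twisted modules `f`:
    {M N : Obj} (u : Hom M M) (v : Hom N N)
    (hu1 : homog u 1) (hv1 : homog v 1)
    (hMC_u : d u + comp u u = 0) (hMC_v : d v + comp v v = 0)
    (f : Hom M N) (hf0 : homog f 0)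
    (hfmor : d f + comp v f - comp f u = 0) :
    ((∃ g : Hom N M, homog g 0 ∧ d g + comp u g - comp g v = 0 ∧
        comp g f = one M ∧ comp f g = one N) ↔ iso0 f) ∧
      (∀ g : Hom N M, comp g f = one M → comp f g = one N →
        d g = comp g v - comp u g ∧ d g + comp u g - comp g v = 0) :=
  twisted_iso_iff_first_component_iso_general Hom homog comp one d iso0 comp_assoc one_comp comp_one
    comp_add_left comp_add_right d_one leibniz triangular homog_inv u v f hf0 hfmor
end
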